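/- Let H ∈ (1/2,1), let κ ≥ 1 and p ≥ 1 be integers, and let 0 < γ < H be such that (2p−1)κH − (2γp+2)κ > −1 and 2pκ(H−γ) − κH > 0. Let 0 ≤ s′ < t′ ≤ 1, let C > 0, and let X be a jointly measurable real-valued (or ℝ^d-valued) stochastic process on [s′,t′] such that E[|X_ξ − X_η|^{(2p−1)κ}] ≤ C·|ξ−η|^{(2p−1)κH} for all ξ, η ∈ [s′,t′]. For s ∈ [s′,t′] define μ_s = 4p · ∫_{s′}^s ∫_s^{t′} |X_ξ − X_η|^{2p−1} / |ξ−η|^{2γp+2} dξ dη. Then there exists a constant c, depending only on C, p, κ, γ, H, such that E[ μ_s^κ ] ≤ c · (t′ − s′)^{2pκ(H−γ) − κH} for all s ∈ [s′,t′]. -/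

import Mathlib

/-!
Write `T = t' - s'` and `β = (2p-1)κH - (2γp+2)κ > -1`. Since `μ_s` is `4p` times an integral
over the rectangle `[s', s] × [s, t']`, of area at most `T²`, Hölder's inequality gives
`μ_s^κ ≤ (4p)^κ T^{2(κ-1)} ∫∫ |X_ξ - X_η|^{(2p-1)κ} / |ξ-η|^{(2γp+2)κ}`. Taking expectations
inside by Tonelli, the moment hypothesis bounds the integrand by `C (ξ-η)^β`, which is integrable
on the rectangle because `β > -1`, with integral at most `T^{β+2}/(β+1)`. The exponents add up to
`2(κ-1) + β + 2 = 2pκ(H-γ) - κH`.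
-/

open Real MeasureTheory ENNReal Set Function

theorem lintegral_pow_le_measure_univ_pow_mul {α : Type*} [MeasurableSpace α] {μ : Measure α}
    {f : α → ℝ≥0∞} (hf : AEMeasurable f μ) {n : ℕ} (hn : 1 ≤ n) :
    (∫⁻ a, f a ∂μ) ^ n ≤ μ univ ^ (n - 1) * ∫⁻ a, f a ^ n ∂μ := by
  obtain rfl | hn1 := hn.eq_or_lt
  · simp
  have hnR : (1 : ℝ) < n := by exact_mod_cast hn1
  have hn0 : (0 : ℝ) < n := by positivity
  have holder := ENNReal.lintegral_mul_le_Lp_mul_Lq μ (Real.HolderConjugate.conjExponent hnR) hf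
    (aemeasurable_const (b := (1 : ℝ≥0∞)))
  simp only [Pi.mul_apply, mul_one, ENNReal.one_rpow, lintegral_const, one_mul] at holder
  have hconj : 1 / Real.conjExponent n * n = ((n - 1 : ℕ) : ℝ) := by
    rw [Real.conjExponent, Nat.cast_sub hn]
    field_simp
    simp
  calc (∫⁻ a, f a ∂μ) ^ n = (∫⁻ a, f a ∂μ) ^ (n : ℝ) := (ENNReal.rpow_natCast _ _).symm
    _ ≤ ((∫⁻ a, f a ^ (n : ℝ) ∂μ) ^ (1 / (n : ℝ)) * μ univ ^ (1 / Real.conjExponent n)) ^ (n : ℝ) :=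
        ENNReal.rpow_le_rpow holder hn0.le
    _ = μ univ ^ (n - 1) * ∫⁻ a, f a ^ n ∂μ := by
        rw [ENNReal.mul_rpow_of_nonneg _ _ hn0.le, ← ENNReal.rpow_mul, ← ENNReal.rpow_mul,
          one_div_mul_cancel hn0.ne', ENNReal.rpow_one, hconj, mul_comm]
        simp only [ENNReal.rpow_natCast]

theorem lintegral_lintegral_pow_le {Ω α : Type*} [MeasurableSpace Ω] [MeasurableSpace α]
    {μ : Measure Ω} {ν : Measure α} [SFinite μ] [SFinite ν] {G : Ω → α → ℝ≥0∞}
    (hG : Measurable (uncurry G)) {n : ℕ} (hn : 1 ≤ n) :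
    ∫⁻ ω, (∫⁻ z, G ω z ∂ν) ^ n ∂μ ≤ ν univ ^ (n - 1) * ∫⁻ z, ∫⁻ ω, G ω z ^ n ∂μ ∂ν := by
  have hGn : Measurable (uncurry fun ω z ↦ G ω z ^ n) := hG.pow_const n
  calc ∫⁻ ω, (∫⁻ z, G ω z ∂ν) ^ n ∂μ
      ≤ ∫⁻ ω, ν univ ^ (n - 1) * ∫⁻ z, G ω z ^ n ∂ν ∂μ := lintegral_mono fun _ ↦
        lintegral_pow_le_measure_univ_pow_mul hG.of_uncurry_left.aemeasurable hn
    _ = ν univ ^ (n - 1) * ∫⁻ ω, ∫⁻ z, G ω z ^ n ∂ν ∂μ :=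
        lintegral_const_mul _ hGn.lintegral_prod_right'
    _ = ν univ ^ (n - 1) * ∫⁻ z, ∫⁻ ω, G ω z ^ n ∂μ ∂ν := by
        rw [lintegral_lintegral_swap hGn.aemeasurable]

theorem lintegral_ofReal_div_rpow_pow_le {Ω : Type*} [MeasurableSpace Ω] {μ : Measure Ω}
    (Y : Ω → ℝ) {d : ℝ} (hd : 0 < d) (m n : ℕ) (r q C : ℝ)
    (hY : ∫⁻ ω, ENNReal.ofReal (|Y ω| ^ (m * n)) ∂μ ≤ ENNReal.ofReal (C * d ^ q)) :
    ∫⁻ ω, ENNReal.ofReal (|Y ω| ^ m / d ^ r) ^ n ∂μ ≤ ENNReal.ofReal (C * d ^ (q - r * n)) := by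
  have hdrn : 0 < d ^ (r * n) := rpow_pos_of_pos hd _
  have hpow (ω : Ω) : ENNReal.ofReal (|Y ω| ^ m / d ^ r) ^ n =
      ENNReal.ofReal (|Y ω| ^ (m * n)) * (ENNReal.ofReal (d ^ (r * n)))⁻¹ := by
    rw [← ENNReal.ofReal_pow (by positivity), div_pow, pow_mul, ← Real.rpow_natCast (d ^ r),
      ← rpow_mul hd.le, ENNReal.ofReal_div_of_pos hdrn, div_eq_mul_inv]
  calc ∫⁻ ω, ENNReal.ofReal (|Y ω| ^ m / d ^ r) ^ n ∂μ
      = (∫⁻ ω, ENNReal.ofReal (|Y ω| ^ (m * n)) ∂μ) * (ENNReal.ofReal (d ^ (r * n)))⁻¹ := by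
        simp_rw [hpow]
        exact lintegral_mul_const' _ _ (ENNReal.inv_ne_top.mpr (ENNReal.ofReal_pos.mpr hdrn).ne')
    _ ≤ ENNReal.ofReal (C * d ^ q) * (ENNReal.ofReal (d ^ (r * n)))⁻¹ := by gcongr
    _ = ENNReal.ofReal (C * d ^ (q - r * n)) := by
        rw [← div_eq_mul_inv, ← ENNReal.ofReal_div_of_pos hdrn, mul_div_assoc, ← rpow_sub hd]

theorem lintegral_Icc_rpow_sub_le {η s b β : ℝ} (hβ : -1 < β) (hηs : η ≤ s) (hsb : s ≤ b) :
    ∫⁻ ξ in Icc s b, ENNReal.ofReal ((ξ - η) ^ β) ≤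
      ENNReal.ofReal ((b - η) ^ (β + 1) / (β + 1)) := by
  have hint : IntervalIntegrable (fun ξ ↦ (ξ - η) ^ β) volume s b := by
    simpa using
      (intervalIntegral.intervalIntegrable_rpow' (a := s - η) (b := b - η) hβ).comp_sub_right η
  have hnonneg : 0 ≤ᵐ[volume.restrict (Ioc s b)] fun ξ ↦ (ξ - η) ^ β := by
    filter_upwards [ae_restrict_mem measurableSet_Ioc] with ξ hξ
    exact rpow_nonneg (by linarith [hξ.1]) _
  rw [← setLIntegral_congr Ioc_ae_eq_Icc, ← ofReal_integral_eq_lintegral_ofReal hint.1 hnonneg,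
    ← intervalIntegral.integral_of_le hsb, intervalIntegral.integral_comp_sub_right (· ^ β),
    integral_rpow (Or.inl hβ)]
  refine ENNReal.ofReal_le_ofReal (div_le_div_of_nonneg_right ?_ (by linarith))
  linarith [rpow_nonneg (sub_nonneg.mpr hηs) (β + 1)]

section Rectangle

variable {a s b : ℝ}

theorem measure_univ_prod_restrict_Ico_Icc_le (has : a ≤ s) (hsb : s ≤ b) :
    (volume.restrict (Ico a s)).prod (volume.restrict (Icc s b)) univ ≤
      ENNReal.ofReal ((b - a) ^ 2) := by
  rw [← univ_prod_univ, Measure.prod_prod, Measure.restrict_apply_univ,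
    Measure.restrict_apply_univ, Real.volume_Ico, Real.volume_Icc, sq,
    ENNReal.ofReal_mul (by linarith)]
  gcongr

theorem lintegral_prod_restrict_Ico_Icc_rpow_sub_le {β : ℝ} (hβ : -1 < β) (has : a ≤ s)
    (hsb : s ≤ b) :
    ∫⁻ z, ENNReal.ofReal ((z.2 - z.1) ^ β)
        ∂(volume.restrict (Ico a s)).prod (volume.restrict (Icc s b))
      ≤ ENNReal.ofReal ((b - a) ^ (β + 2) / (β + 1)) := by
  rw [lintegral_prod _ (by fun_prop)]
  calc ∫⁻ η in Ico a s, ∫⁻ ξ in Icc s b, ENNReal.ofReal ((ξ - η) ^ β)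
      ≤ ∫⁻ _ in Ico a s, ENNReal.ofReal ((b - a) ^ (β + 1) / (β + 1)) := by
        refine setLIntegral_mono measurable_const fun η hη ↦
          (lintegral_Icc_rpow_sub_le hβ hη.2.le hsb).trans ?_
        gcongr
        all_goals linarith [hη.1, hη.2]
    _ ≤ ENNReal.ofReal (b - a) * ENNReal.ofReal ((b - a) ^ (β + 1) / (β + 1)) := by
        rw [setLIntegral_const, Real.volume_Ico, mul_comm]
        gcongr
    _ = ENNReal.ofReal ((b - a) ^ (β + 2) / (β + 1)) := by
        rw [← ENNReal.ofReal_mul (by linarith), show β + 2 = β + 1 + 1 by ring,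
          rpow_add_one' (x := b - a) (y := β + 1) (by linarith) (by linarith)]
        congr 1
        ring

theorem lintegral_pow_lintegral_prod_restrict_Ico_Icc_le {Ω : Type*} [MeasurableSpace Ω]
    {μ : Measure Ω} [SFinite μ] {G : Ω → ℝ × ℝ → ℝ≥0∞} (hG : Measurable (uncurry G))
    {n : ℕ} (hn : 1 ≤ n) {β : ℝ} (hβ : -1 < β) (has : a ≤ s) (hsb : s ≤ b) {K : ℝ≥0∞}
    (hGn : ∀ᵐ z ∂(volume.restrict (Ico a s)).prod (volume.restrict (Icc s b)),
      ∫⁻ ω, G ω z ^ n ∂μ ≤ K * ENNReal.ofReal ((z.2 - z.1) ^ β)) :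
    ∫⁻ ω, (∫⁻ z, G ω z ∂(volume.restrict (Ico a s)).prod (volume.restrict (Icc s b))) ^ n ∂μ ≤
      ENNReal.ofReal ((b - a) ^ 2) ^ (n - 1) *
        (K * ENNReal.ofReal ((b - a) ^ (β + 2) / (β + 1))) := by
  refine (lintegral_lintegral_pow_le hG hn).trans ?_
  gcongr
  · exact measure_univ_prod_restrict_Ico_Icc_le has hsb
  · refine (lintegral_mono_ae hGn).trans ?_
    rw [lintegral_const_mul _ (by fun_prop)]
    gcongr
    exact lintegral_prod_restrict_Ico_Icc_rpow_sub_le hβ has hsb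

end Rectangle

section Increments

variable {Ω : Type*} [MeasurableSpace Ω]

noncomputable def incrementQuotient (X : ℝ → Ω → ℝ) (m : ℕ) (r : ℝ) (ω : Ω) (z : ℝ × ℝ) : ℝ≥0∞ :=
  ENNReal.ofReal (|X z.2 ω - X z.1 ω| ^ m / |z.2 - z.1| ^ r)

theorem measurable_incrementQuotient {X : ℝ → Ω → ℝ} (hX : Measurable (uncurry X)) (m : ℕ)
    (r : ℝ) : Measurable (uncurry (incrementQuotient X m r)) := by
  have h₂ : Measurable fun q : Ω × (ℝ × ℝ) ↦ X q.2.2 q.1 :=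
    hX.comp (measurable_snd.snd.prodMk measurable_fst)
  have h₁ : Measurable fun q : Ω × (ℝ × ℝ) ↦ X q.2.1 q.1 :=
    hX.comp (measurable_snd.fst.prodMk measurable_fst)
  unfold incrementQuotient
  fun_prop

theorem ae_lintegral_incrementQuotient_pow_le {μ : Measure Ω} {X : ℝ → Ω → ℝ} {m n : ℕ}
    {r q C a s b : ℝ} (hC : 0 ≤ C) (hs : s ∈ Icc a b)
    (hX : ∀ ξ ∈ Icc a b, ∀ η ∈ Icc a b,
      ∫⁻ ω, ENNReal.ofReal (|X ξ ω - X η ω| ^ (m * n)) ∂μ ≤ ENNReal.ofReal (C * |ξ - η| ^ q)) :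
    ∀ᵐ z ∂(volume.restrict (Ico a s)).prod (volume.restrict (Icc s b)),
      ∫⁻ ω, incrementQuotient X m r ω z ^ n ∂μ ≤
        ENNReal.ofReal C * ENNReal.ofReal ((z.2 - z.1) ^ (q - r * n)) := by
  rw [Measure.prod_restrict]
  filter_upwards [ae_restrict_mem (measurableSet_Ico.prod measurableSet_Icc)]
    with z ⟨hz₁, hz₂⟩
  have hz : 0 < z.2 - z.1 := by linarith [hz₁.2, hz₂.1]
  refine (lintegral_ofReal_div_rpow_pow_le _ (abs_pos.mpr hz.ne') m n r q C
    (hX z.2 ⟨by linarith [hz₁.1], hz₂.2⟩ z.1 ⟨hz₁.1, by linarith [hz₁.2, hs.2]⟩)).trans_eq ?_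
  rw [abs_of_pos hz, ENNReal.ofReal_mul hC]

end Increments

theorem sq_pow_mul_rpow_add_two {T : ℝ} (hT : 0 < T) {n : ℕ} (hn : 1 ≤ n) (β : ℝ) :
    (T ^ 2) ^ (n - 1) * T ^ (β + 2) = T ^ (β + 2 * n) := by
  rw [← pow_mul, ← Real.rpow_natCast, ← rpow_add hT, Nat.cast_mul, Nat.cast_sub hn]
  congr 1
  push_cast
  ring

theorem moment_bound_mu_general
    (H : ℝ) (κ p : ℕ) (hκ : 1 ≤ κ) (hp : 1 ≤ p)
    (γ : ℝ)
    (hcond1 : (2 * (p : ℝ) - 1) * κ * H - (2 * γ * p + 2) * κ > -1)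
    (C : ℝ) (hC : 0 < C) :
    ∃ c : ℝ, 0 < c ∧
      ∀ (Ω : Type) [MeasureSpace Ω], IsProbabilityMeasure (volume : Measure Ω) →
        ∀ s' t' : ℝ, 0 ≤ s' → s' < t' → t' ≤ 1 →
          ∀ X : ℝ → Ω → ℝ,
            Measurable (Function.uncurry X) →
            (∀ ξ ∈ Set.Icc s' t', ∀ η ∈ Set.Icc s' t',
              (∫⁻ ω, ENNReal.ofReal (|X ξ ω - X η ω| ^ ((2 * p - 1) * κ))) ≤
                ENNReal.ofReal (C * |ξ - η| ^ ((2 * (p : ℝ) - 1) * κ * H))) →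
            ∀ s ∈ Set.Icc s' t',
              (∫⁻ ω, (ENNReal.ofReal (4 * (p : ℝ)) *
                  ∫⁻ η in Set.Icc s' s, ∫⁻ ξ in Set.Icc s t',
                    ENNReal.ofReal (|X ξ ω - X η ω| ^ (2 * p - 1) / |ξ - η| ^ (2 * γ * p + 2)))
                  ^ κ)
                ≤ ENNReal.ofReal (c * (t' - s') ^ (2 * (p : ℝ) * κ * (H - γ) - κ * H)) := by
  set β : ℝ := (2 * (p : ℝ) - 1) * κ * H - (2 * γ * p + 2) * κ with hβ_def
  have hβ : 0 < β + 1 := by linarith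
  refine ⟨(4 * (p : ℝ)) ^ κ * C / (β + 1), by positivity, ?_⟩
  intro Ω _ _ s' t' _ hst _ X hX hmom s hs
  set P := (volume.restrict (Ico s' s)).prod (volume.restrict (Icc s t'))
  set G := incrementQuotient X (2 * p - 1) (2 * γ * p + 2)
  have hG : Measurable (uncurry G) := measurable_incrementQuotient hX _ _
  -- `Ico` rather than `Icc`: the point `η = ξ = s` is null, and off it `η < ξ`.
  have hprod (ω : Ω) : ∫⁻ η in Icc s' s, ∫⁻ ξ in Icc s t', G ω (η, ξ) = ∫⁻ z, G ω z ∂P := by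
    rw [lintegral_prod _ hG.of_uncurry_left.aemeasurable, setLIntegral_congr Ico_ae_eq_Icc]
  calc _ = ENNReal.ofReal (4 * p) ^ κ * ∫⁻ ω, (∫⁻ z, G ω z ∂P) ^ κ := by
        simp_rw [← hprod, mul_pow]
        exact lintegral_const_mul' _ _ (by finiteness)
    _ ≤ ENNReal.ofReal (4 * p) ^ κ * (ENNReal.ofReal ((t' - s') ^ 2) ^ (κ - 1) *
          (ENNReal.ofReal C * ENNReal.ofReal ((t' - s') ^ (β + 2) / (β + 1)))) := by
        gcongr
        exact lintegral_pow_lintegral_prod_restrict_Ico_Icc_le hG hκ (by linarith) hs.1 hs.2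
          (ae_lintegral_incrementQuotient_pow_le hC.le hs hmom)
    _ = _ := by
        rw [← ENNReal.ofReal_pow (by positivity), ← ENNReal.ofReal_pow (by positivity),
          ← ENNReal.ofReal_mul hC.le, ← ENNReal.ofReal_mul (by positivity),
          ← ENNReal.ofReal_mul (by positivity)]
        congr 1
        rw [show 2 * (p : ℝ) * κ * (H - γ) - κ * H = β + 2 * κ by rw [hβ_def]; ring,
          ← sq_pow_mul_rpow_add_two (by linarith) hκ]
        ring

/-- Moment bound for `μ_s = 4p ∫_{s'}^s ∫_s^{t'} |X_ξ - X_η|^{2p-1}/|ξ-η|^{2γp+2} dξ dη`,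
for a process with `E[|X_ξ - X_η|^{(2p-1)κ}] ≤ C |ξ-η|^{(2p-1)κH}`:
`E[μ_s^κ] ≤ c (t'-s')^{2pκ(H-γ) - κH}` with `c` depending only on `C,p,κ,γ,H`. -/
theorem moment_bound_mu
    (H : ℝ) (hH1 : 1 / 2 < H) (hH2 : H < 1) (κ p : ℕ) (hκ : 1 ≤ κ) (hp : 1 ≤ p)
    (γ : ℝ) (hγ0 : 0 < γ) (hγH : γ < H)
    (hcond1 : (2 * (p : ℝ) - 1) * κ * H - (2 * γ * p + 2) * κ > -1)
    (hcond2 : 2 * (p : ℝ) * κ * (H - γ) - κ * H > 0)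
    (C : ℝ) (hC : 0 < C) :
    ∃ c : ℝ, 0 < c ∧
      ∀ (Ω : Type) [MeasureSpace Ω], IsProbabilityMeasure (volume : Measure Ω) →
        ∀ s' t' : ℝ, 0 ≤ s' → s' < t' → t' ≤ 1 →
          ∀ X : ℝ → Ω → ℝ,
            Measurable (Function.uncurry X) →
            (∀ ξ ∈ Set.Icc s' t', ∀ η ∈ Set.Icc s' t',
              (∫⁻ ω, ENNReal.ofReal (|X ξ ω - X η ω| ^ ((2 * p - 1) * κ))) ≤
                ENNReal.ofReal (C * |ξ - η| ^ ((2 * (p : ℝ) - 1) * κ * H))) →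
            ∀ s ∈ Set.Icc s' t',
              (∫⁻ ω, (ENNReal.ofReal (4 * (p : ℝ)) *
                  ∫⁻ η in Set.Icc s' s, ∫⁻ ξ in Set.Icc s t',
                    ENNReal.ofReal (|X ξ ω - X η ω| ^ (2 * p - 1) / |ξ - η| ^ (2 * γ * p + 2)))
                  ^ κ)
                ≤ ENNReal.ofReal (c * (t' - s') ^ (2 * (p : ℝ) * κ * (H - γ) - κ * H)) :=
  moment_bound_mu_general H κ p hκ hp γ hcond1 C hC
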